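/- Let ã, r̃, q̃ be real numbers with 0 < ã < 1, r̃ > 1, and 0 < q̃ ≤ ã/r̃. For p ∈ (0,1], set r*(p) = max( ã/(p·q̃), r̃ ). Define ε(p) = log( 2p(1−q̃) / ( √((1−p)² + 4p(1−q̃)(1/r*(p) − p·q̃)) − (1−p) ) ) for p ∈ (0,1]. Then ε(p) ≥ (1/2)·log( ã(1−q̃) / ( q̃(1−ã) ) ) for every p ∈ (0,1], and ε(1) = (1/2)·log( ã(1−q̃) / ( q̃(1−ã) ) ). -/

import Mathlib

/-- The privacy-budget threshold `ε_i(p, q̃)` (for `q̃ < 1`) under the risk profile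
`r*(p,q̃) = max{ã/(p·q̃), r̃}`. -/
noncomputable def epsThreshold16 (a r q p : ℝ) : ℝ :=
  Real.log (2 * p * (1 - q) /
    (Real.sqrt ((1 - p) ^ 2 + 4 * p * (1 - q) * (1 / max (a / (p * q)) r - p * q)) - (1 - p)))

theorem stmt_16 (a r q : ℝ) (ha0 : 0 < a) (ha1 : a < 1) (hr : 1 < r)
    (hq0 : 0 < q) (hq : q ≤ a / r) :
    (∀ p : ℝ, 0 < p → p ≤ 1 →
      (1 / 2) * Real.log (a * (1 - q) / (q * (1 - a))) ≤ epsThreshold16 a r q p) ∧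
    epsThreshold16 a r q 1 = (1 / 2) * Real.log (a * (1 - q) / (q * (1 - a))) := by
  have hr0 : (0:ℝ) < r := by linarith
  have hq1 : q < 1 := lt_of_le_of_lt hq (lt_trans (div_lt_self ha0 hr) ha1)
  have ha1' : (0:ℝ) < 1 - a := by linarith
  have hq1' : (0:ℝ) < 1 - q := by linarith
  have hqr : q * r ≤ a := (le_div_iff₀ hr0).mp hq
  set k : ℝ := q * (1 - q) * (1 - a) / a with hk
  have hkpos : 0 < k := by positivity
  set sk : ℝ := Real.sqrt k with hsk
  have hskpos : 0 < sk := Real.sqrt_pos.mpr hkpos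
  have hsk2 : sk ^ 2 = k := Real.sq_sqrt hkpos.le
  -- rewrite epsThreshold16 in the simplified form
  have key : ∀ p : ℝ, 0 < p → p ≤ 1 →
      epsThreshold16 a r q p =
        Real.log (2 * p * (1 - q) /
          (Real.sqrt ((1 - p) ^ 2 + 4 * p ^ 2 * k) - (1 - p))) := by
    intro p hp0 hp1
    have hpq : 0 < p * q := mul_pos hp0 hq0
    have hmax : max (a / (p * q)) r = a / (p * q) := by
      apply max_eq_left
      rw [le_div_iff₀ hpq]
      nlinarith
    have harg : (1 - p) ^ 2 + 4 * p * (1 - q) * (p * q / a - p * q)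
        = (1 - p) ^ 2 + 4 * p ^ 2 * k := by
      rw [hk]; field_simp
    unfold epsThreshold16
    rw [hmax, one_div_div, harg]
  have htarget : (1 / 2) * Real.log (a * (1 - q) / (q * (1 - a)))
      = Real.log ((1 - q) / sk) := by
    have h1 : a * (1 - q) / (q * (1 - a)) = ((1 - q) / sk) ^ 2 := by
      rw [div_pow, hsk2, hk]
      field_simp
    rw [h1, Real.log_pow]
    push_cast
    ring
  -- basic facts about S for 0 < p ≤ 1
  have hSfacts : ∀ p : ℝ, 0 < p → p ≤ 1 →
      Real.sqrt ((1 - p) ^ 2 + 4 * p ^ 2 * k) ≤ (1 - p) + 2 * p * sk ∧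
      (1 - p) < Real.sqrt ((1 - p) ^ 2 + 4 * p ^ 2 * k) := by
    intro p hp0 hp1
    have hp1' : (0:ℝ) ≤ 1 - p := by linarith
    constructor
    · have h1 : (1 - p) ^ 2 + 4 * p ^ 2 * k ≤ ((1 - p) + 2 * p * sk) ^ 2 := by
        nlinarith [mul_nonneg (mul_nonneg hp0.le hp1') hskpos.le]
      calc Real.sqrt ((1 - p) ^ 2 + 4 * p ^ 2 * k)
          ≤ Real.sqrt (((1 - p) + 2 * p * sk) ^ 2) := Real.sqrt_le_sqrt h1
        _ = (1 - p) + 2 * p * sk := Real.sqrt_sq (by nlinarith)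
    · rw [Real.lt_sqrt (by positivity)]
      nlinarith [mul_pos (pow_pos hp0 2) hkpos]
  refine ⟨?_, ?_⟩
  · intro p hp0 hp1
    obtain ⟨hS1, hS2⟩ := hSfacts p hp0 hp1
    set S := Real.sqrt ((1 - p) ^ 2 + 4 * p ^ 2 * k) with hS
    have hd : 0 < S - (1 - p) := by linarith
    rw [key p hp0 hp1, htarget]
    apply Real.log_le_log (by positivity)
    rw [div_le_div_iff₀ hskpos hd]
    nlinarith [mul_pos hp0 hq1']
  · rw [key 1 one_pos le_rfl, htarget]
    have h4 : ((1:ℝ) - 1) ^ 2 + 4 * 1 ^ 2 * k = 4 * k := by ring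
    have hsqrt : Real.sqrt (4 * k) = 2 * sk := by
      rw [show (4:ℝ) = 2 ^ 2 by norm_num, Real.sqrt_mul (by positivity),
        Real.sqrt_sq (by norm_num : (0:ℝ) ≤ 2)]
    rw [h4, hsqrt]
    congr 1
    field_simp
    ring
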